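/- Let Φ : ℝⁿ × ℝⁿ → ℝ be jointly convex and differentiable. Then for random variables X, X̄ with finite second moments and with all terms integrable: E[Φ(X, E[X])] − E[Φ(X̄, E[X̄])] ≥ E[⟨∂₁Φ(X̄, E[X̄]) + E[∂₂Φ(X̄, E[X̄])], X − X̄⟩]. -/

import Mathlib

/-!
For jointly convex `Φ`, partial gradients already give the joint gradient inequality
`Φ (a, b) ≥ Φ (x, y) + ⟪∂₁Φ, a - x⟫ + ⟪∂₂Φ, b - y⟫`: along the segment from `p = (x, y)` to
`p + u + v`, with `u = (a - x, 0)` and `v = (0, b - y)`, the convex function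
`t ↦ Φ (p + t (u + v))` lies below `t ↦ ½ Φ (p + 2t u) + ½ Φ (p + 2t v)` and agrees with it at `0`.
The majorant is differentiable at `0` with derivative `⟪∂₁Φ, a - x⟫ + ⟪∂₂Φ, b - y⟫`, and its left
difference quotients at `0` are at most those of the convex function, hence at most its chord
slope on `[0, 1]`.
Taking expectations at `(a, b) = (X, E X)`, `(x, y) = (X̄, E X̄)` and using
`E ⟪∂₂Φ, E X - E X̄⟫ = E ⟪E ∂₂Φ, X - X̄⟫` gives the theorem.
-/

open MeasureTheory Set Filter

lemma ConvexOn.le_sub_of_hasDerivAt_of_le {m k : ℝ → ℝ} {c : ℝ} (hm : ConvexOn ℝ univ m)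
    (hle : m ≤ k) (h₀ : m 0 = k 0) (hk : HasDerivAt k c 0) : c ≤ m 1 - m 0 := by
  refine le_of_tendsto hk.tendsto_slope_zero_left (eventually_nhdsWithin_of_forall fun t ht => ?_)
  have ht : t < 0 := ht
  calc t⁻¹ • (k (0 + t) - k 0) ≤ slope m 0 t := by
        rw [slope_def_field, zero_add, h₀, smul_eq_mul, sub_zero, div_eq_inv_mul]
        exact mul_le_mul_of_nonpos_left (by linarith [hle t]) (inv_nonpos.mpr ht.le)
    _ ≤ slope m 0 1 :=
        hm.slope_mono (mem_univ 0) ⟨mem_univ t, ht.ne⟩ ⟨mem_univ 1, one_ne_zero⟩ (by linarith)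
    _ = m 1 - m 0 := by simp [slope_def_field]

lemma ConvexOn.add_le_sub_of_hasDerivAt_add_smul {V : Type*} [AddCommGroup V] [Module ℝ V]
    {Φ : V → ℝ} (hΦ : ConvexOn ℝ univ Φ) {p u v : V} {α β : ℝ}
    (hu : HasDerivAt (fun t : ℝ => Φ (p + t • u)) α 0)
    (hv : HasDerivAt (fun t : ℝ => Φ (p + t • v)) β 0) :
    α + β ≤ Φ (p + (u + v)) - Φ p := by
  have hline : ConvexOn ℝ univ (fun t : ℝ => Φ (p + t • (u + v))) := by
    have hcomp : (fun t : ℝ => Φ (p + t • (u + v))) = Φ ∘ AffineMap.lineMap p (p + (u + v)) := by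
      ext t
      simp [AffineMap.lineMap_apply_module', add_comm]
    simpa only [hcomp, preimage_univ] using
      hΦ.comp_affineMap (AffineMap.lineMap (k := ℝ) p (p + (u + v)))
  have hmaj : (fun t : ℝ => Φ (p + t • (u + v))) ≤
      fun t : ℝ => 2⁻¹ * Φ (p + (2 * t) • u) + 2⁻¹ * Φ (p + (2 * t) • v) := fun t => by
    have hmid : p + t • (u + v) = (2⁻¹ : ℝ) • (p + (2 * t) • u) + (2⁻¹ : ℝ) • (p + (2 * t) • v) := by
      module
    simpa only [hmid, smul_eq_mul] using
      hΦ.2 (mem_univ _) (mem_univ _) (by norm_num) (by norm_num) (by norm_num)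
  have hderiv : HasDerivAt (fun t : ℝ => 2⁻¹ * Φ (p + (2 * t) • u) + 2⁻¹ * Φ (p + (2 * t) • v))
      (2⁻¹ * (α * 2) + 2⁻¹ * (β * 2)) 0 := by
    have h2 : HasDerivAt (fun t : ℝ => 2 * t) (2 : ℝ) 0 := by
      simpa using (hasDerivAt_id (0 : ℝ)).const_mul (2 : ℝ)
    have h20 : (0 : ℝ) = 2 * 0 := (mul_zero 2).symm
    exact ((hu.comp_of_eq 0 h2 h20).const_mul _).add ((hv.comp_of_eq 0 h2 h20).const_mul _)
  have := hline.le_sub_of_hasDerivAt_of_le hmaj (by simp only [smul_add, zero_smul, add_zero, mul_zero]; ring) hderiv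
  simp only [one_smul, zero_smul, add_zero] at this
  linarith

lemma HasGradientAt.hasDerivAt_add_smul {E : Type*} [NormedAddCommGroup E] [InnerProductSpace ℝ E]
    [CompleteSpace E] {f : E → ℝ} {g x : E} (hf : HasGradientAt f g x) (d : E) :
    HasDerivAt (fun t : ℝ => f (x + t • d)) (inner ℝ g d) 0 := by
  have hline : HasDerivAt (fun t : ℝ => x + t • d) d 0 := by
    simpa using ((hasDerivAt_id (0 : ℝ)).smul_const d).const_add x
  simpa [Function.comp_def] using hf.hasFDerivAt.comp_hasDerivAt_of_eq 0 hline (by simp)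

lemma ConvexOn.add_inner_add_inner_le {E F : Type*} [NormedAddCommGroup E] [InnerProductSpace ℝ E]
    [CompleteSpace E] [NormedAddCommGroup F] [InnerProductSpace ℝ F] [CompleteSpace F]
    {Φ : E × F → ℝ} (hΦ : ConvexOn ℝ univ Φ) {x a : E} {y b : F} {g₁ : E} {g₂ : F}
    (h₁ : HasGradientAt (fun x' => Φ (x', y)) g₁ x) (h₂ : HasGradientAt (fun y' => Φ (x, y')) g₂ y) :
    Φ (x, y) + inner ℝ g₁ (a - x) + inner ℝ g₂ (b - y) ≤ Φ (a, b) := by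
  have := hΦ.add_le_sub_of_hasDerivAt_add_smul (p := (x, y)) (u := (a - x, 0)) (v := (0, b - y))
    (by simpa using h₁.hasDerivAt_add_smul (a - x)) (by simpa using h₂.hasDerivAt_add_smul (b - y))
  simp only [Prod.mk_add_mk, add_zero, zero_add, add_sub_cancel] at this
  linarith

theorem stmt10_general {n : ℕ} {Ω : Type*} [MeasurableSpace Ω] (P : Measure Ω)
    [IsProbabilityMeasure P]
    (Φ : EuclideanSpace ℝ (Fin n) × EuclideanSpace ℝ (Fin n) → ℝ)
    (g₁ g₂ : EuclideanSpace ℝ (Fin n) × EuclideanSpace ℝ (Fin n) →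
      EuclideanSpace ℝ (Fin n))
    (hconv : ConvexOn ℝ Set.univ Φ)
    (hdiff₁ : ∀ p, HasGradientAt (fun x => Φ (x, p.2)) (g₁ p) p.1)
    (hdiff₂ : ∀ p, HasGradientAt (fun y => Φ (p.1, y)) (g₂ p) p.2)
    (X Xbar : Ω → EuclideanSpace ℝ (Fin n))
    (hX : MemLp X 2 P) (hXbar : MemLp Xbar 2 P)
    (hint1 : Integrable (fun ω => Φ (X ω, ∫ ω', X ω' ∂P)) P)
    (hint2 : Integrable (fun ω => Φ (Xbar ω, ∫ ω', Xbar ω' ∂P)) P)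
    (hint4 : Integrable (fun ω => g₂ (Xbar ω, ∫ ω', Xbar ω' ∂P)) P)
    (hint5 : Integrable (fun ω =>
      (inner ℝ (g₁ (Xbar ω, ∫ ω', Xbar ω' ∂P)
          + ∫ ω'', g₂ (Xbar ω'', ∫ ω', Xbar ω' ∂P) ∂P) (X ω - Xbar ω) : ℝ)) P) :
    (∫ ω, (inner ℝ (g₁ (Xbar ω, ∫ ω', Xbar ω' ∂P)
          + ∫ ω'', g₂ (Xbar ω'', ∫ ω', Xbar ω' ∂P) ∂P) (X ω - Xbar ω) : ℝ) ∂P)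
      ≤ (∫ ω, Φ (X ω, ∫ ω', X ω' ∂P) ∂P) - ∫ ω, Φ (Xbar ω, ∫ ω', Xbar ω' ∂P) ∂P := by
  set m := ∫ ω, X ω ∂P
  set mbar := ∫ ω, Xbar ω ∂P
  set c := ∫ ω, g₂ (Xbar ω, mbar) ∂P
  have hXi := hX.integrable one_le_two
  have hXbari := hXbar.integrable one_le_two
  have hdev : Integrable (fun ω => X ω - Xbar ω) P := hXi.sub hXbari
  have hc : Integrable (fun ω => inner ℝ c (X ω - Xbar ω)) P := hdev.const_inner c
  have h₁ : Integrable (fun ω => inner ℝ (g₁ (Xbar ω, mbar)) (X ω - Xbar ω)) P := by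
    simpa only [Pi.sub_def, inner_add_left, add_sub_cancel_right] using hint5.sub hc
  have h₂ : Integrable (fun ω => inner ℝ (g₂ (Xbar ω, mbar)) (m - mbar)) P :=
    hint4.inner_const _
  have hmean : ∫ ω, inner ℝ (g₂ (Xbar ω, mbar)) (m - mbar) ∂P
      = ∫ ω, inner ℝ c (X ω - Xbar ω) ∂P := by
    simp_rw [real_inner_comm (m - mbar)]
    rw [integral_inner hint4, integral_inner hdev,
      integral_sub hXi hXbari, real_inner_comm]
  have hpoint : ∀ ω, Φ (Xbar ω, mbar) + inner ℝ (g₁ (Xbar ω, mbar)) (X ω - Xbar ω)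
      + inner ℝ (g₂ (Xbar ω, mbar)) (m - mbar) ≤ Φ (X ω, m) := fun ω =>
    hconv.add_inner_add_inner_le (hdiff₁ (Xbar ω, mbar)) (hdiff₂ (Xbar ω, mbar))
  have hmono := integral_mono ((hint2.add h₁).add h₂) hint1 hpoint
  rw [integral_add' (hint2.add h₁) h₂, integral_add' hint2 h₁, hmean] at hmono
  simp_rw [inner_add_left]
  rw [integral_add h₁ hc]
  linarith

/-- Convexity inequality for mean-field terminal costs: if `Φ : ℝⁿ × ℝⁿ → ℝ` is
jointly convex and differentiable, then for square-integrable random variables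
`X, X̄` (with all terms integrable),
`E[Φ(X, E[X])] − E[Φ(X̄, E[X̄])] ≥ E[⟪∂₁Φ(X̄, E[X̄]) + E[∂₂Φ(X̄, E[X̄])], X − X̄⟫]`. -/
theorem stmt10 {n : ℕ} {Ω : Type*} [MeasurableSpace Ω] (P : Measure Ω)
    [IsProbabilityMeasure P]
    (Φ : EuclideanSpace ℝ (Fin n) × EuclideanSpace ℝ (Fin n) → ℝ)
    (g₁ g₂ : EuclideanSpace ℝ (Fin n) × EuclideanSpace ℝ (Fin n) →
      EuclideanSpace ℝ (Fin n))
    (hconv : ConvexOn ℝ Set.univ Φ)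
    (hdiff₁ : ∀ p, HasGradientAt (fun x => Φ (x, p.2)) (g₁ p) p.1)
    (hdiff₂ : ∀ p, HasGradientAt (fun y => Φ (p.1, y)) (g₂ p) p.2)
    (X Xbar : Ω → EuclideanSpace ℝ (Fin n))
    (hX : MemLp X 2 P) (hXbar : MemLp Xbar 2 P)
    (hint1 : Integrable (fun ω => Φ (X ω, ∫ ω', X ω' ∂P)) P)
    (hint2 : Integrable (fun ω => Φ (Xbar ω, ∫ ω', Xbar ω' ∂P)) P)
    (hint3 : Integrable (fun ω => g₁ (Xbar ω, ∫ ω', Xbar ω' ∂P)) P)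
    (hint4 : Integrable (fun ω => g₂ (Xbar ω, ∫ ω', Xbar ω' ∂P)) P)
    (hint5 : Integrable (fun ω =>
      (inner ℝ (g₁ (Xbar ω, ∫ ω', Xbar ω' ∂P)
          + ∫ ω'', g₂ (Xbar ω'', ∫ ω', Xbar ω' ∂P) ∂P) (X ω - Xbar ω) : ℝ)) P) :
    (∫ ω, (inner ℝ (g₁ (Xbar ω, ∫ ω', Xbar ω' ∂P)
          + ∫ ω'', g₂ (Xbar ω'', ∫ ω', Xbar ω' ∂P) ∂P) (X ω - Xbar ω) : ℝ) ∂P)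
      ≤ (∫ ω, Φ (X ω, ∫ ω', X ω' ∂P) ∂P) - ∫ ω, Φ (Xbar ω, ∫ ω', Xbar ω' ∂P) ∂P :=
  stmt10_general P Φ g₁ g₂ hconv hdiff₁ hdiff₂ X Xbar hX hXbar hint1 hint2 hint4 hint5
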